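/- Let κ ∈ I be an escaping parameter with Re κ ≥ 4 and |Im κ| ≤ Re κ − 2, let K := |κ|, and let z_k := E_κ^∘(k−1)(0) for k ≥ 1 be the singular orbit. Suppose that for every k ≥ 2 one has |Im z_k| < F^∘(k−1)(Re κ − 2) − K. Then for all k ≥ 1 one has |Re z_k| ≥ F^∘(k−1)(Re κ − 1) − K. -/

import Mathlib

open Filter Topology Set MeasureTheory
open scoped ENNReal Real

noncomputable section

/-- The exponential family `E_κ(z) = exp (z + κ)`. -/
def Ek (κ : ℂ) (z : ℂ) : ℂ := Complex.exp (z + κ)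

/-- The model function `F(t) = e^t - 1` for exponential growth. -/
def F (t : ℝ) : ℝ := Real.exp t - 1

/-- The inverse of `F` on the nonnegative reals. -/
def Finv (t : ℝ) : ℝ := Real.log (t + 1)

/-- The shift map `σ` on integer sequences; the sequence `s : ℕ → ℤ` represents
`(s_1, s_2, …)` with `s_{k+1} = s k`. -/
def shiftSeq (s : ℕ → ℤ) : ℕ → ℤ := fun n => s (n + 1)

/-- Exponentially bounded sequences (membership in `S_0`). -/
def expBounded (s : ℕ → ℤ) : Prop := ∃ x > 0, ∀ k : ℕ, |(s k : ℝ)| ≤ F^[k] x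

/-- `t_s^* = sup_{n ≥ 1} F^{∘(-n+1)}(|s_n|)`, as an extended nonnegative real. -/
def tstar (s : ℕ → ℤ) : ℝ≥0∞ := ⨆ n : ℕ, ENNReal.ofReal (Finv^[n] |(s n : ℝ)|)

/-- `t_s^*` as a real number (for exponentially bounded `s`). -/
def tstarR (s : ℕ → ℤ) : ℝ := (tstar s).toReal

/-- The minimal potential `t_s`. -/
def tmin (s : ℕ → ℤ) : ℝ≥0∞ :=
  sInf { y : ℝ≥0∞ | ∃ x : ℝ, 0 < x ∧ y = ENNReal.ofReal x ∧
    Filter.limsup (fun n => ENNReal.ofReal (|(s n : ℝ)| / F^[n] x)) Filter.atTop = 0 }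

/-- The slit plane `ℂ' = ℂ ∖ (-∞, 0]`. -/
def Cprime : Set ℂ := {z : ℂ | 0 < z.re ∨ z.im ≠ 0}

/-- The inverse branch `L_{κ,j}(z) = Log z - κ + 2πij`. -/
def Lk (κ : ℂ) (j : ℤ) (z : ℂ) : ℂ :=
  Complex.log z - κ + 2 * (Real.pi : ℂ) * Complex.I * (j : ℂ)

/-- The pullback approximants `g^n_{κ,s}(t) = L_{κ,s_1} ∘ ⋯ ∘ L_{κ,s_n}(F^∘n(t))`. -/
def gApprox (κ : ℂ) : ℕ → (ℕ → ℤ) → ℝ → ℂ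
  | 0, _, t => (t : ℂ)
  | n + 1, s, t => Lk κ (s 0) (gApprox κ n (shiftSeq s) (F t))

/-- All intermediate values of the `n`-th pullback approximant lie in the slit plane. -/
def approxDefined (κ : ℂ) : ℕ → (ℕ → ℤ) → ℝ → Prop
  | 0, _, _ => True
  | n + 1, s, t => gApprox κ n (shiftSeq s) (F t) ∈ Cprime ∧ approxDefined κ n (shiftSeq s) (F t)

/-- The pullback approximants at `(s, t)` are eventually defined and converge to `z`. -/
def RayTendsto (κ : ℂ) (s : ℕ → ℤ) (t : ℝ) (z : ℂ) : Prop :=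
  (∀ᶠ n in Filter.atTop, approxDefined κ n s t) ∧
  Filter.Tendsto (fun n => gApprox κ n s t) Filter.atTop (nhds z)

/-- The dynamic ray of `E_κ` at address `s` is defined at potential `t`. -/
def RayDefinedAt (κ : ℂ) (s : ℕ → ℤ) (t : ℝ) : Prop := ∃ z, RayTendsto κ s t z

-- The dynamic ray `g_s^κ(t)` (junk value `0` where undefined).
open Classical in
def ray (κ : ℂ) (s : ℕ → ℤ) (t : ℝ) : ℂ :=
  if h : ∃ z, RayTendsto κ s t z then h.choose else 0

/-- The set `𝒢_s(t)` of parameters `κ` for which the dynamic ray of `E_κ` at address `s`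
is defined at potential `t` with `g_s^κ(t) = 0`. -/
def Gset (s : ℕ → ℤ) (t : ℝ) : Set ℂ :=
  {κ : ℂ | ∃ N : ℕ, RayTendsto κ (shiftSeq^[N] s) (F^[N] t) ((Ek κ)^[N] 0)}

/-- The set `I` of escaping parameters. -/
def escapingParams : Set ℂ :=
  {κ : ℂ | Filter.Tendsto (fun n => ‖(Ek κ)^[n] 0‖) Filter.atTop Filter.atTop}

/-- The interval `(t_s, ∞)` of potentials. -/
def rayDomain (s : ℕ → ℤ) : Set ℝ := {t : ℝ | tmin s < ENNReal.ofReal t}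

/-- `κ₀` is a simple root of the holomorphic map `κ ↦ g_s^κ(t)`. -/
def SimpleRoot (s : ℕ → ℤ) (t : ℝ) (κ₀ : ℂ) : Prop :=
  ray κ₀ s t = 0 ∧ RayDefinedAt κ₀ s t ∧
  ∃ U ∈ nhds κ₀, (∀ κ ∈ U, RayDefinedAt κ s t) ∧
    DifferentiableOn ℂ (fun κ => ray κ s t) U ∧
    deriv (fun κ => ray κ s t) κ₀ ≠ 0

end

/-!
Index the orbit as `z_k = E_κ^k(0)` and put `x_k = Re z_k + Re κ`, so `|z_{k+1}| = exp x_k`.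
We show `x_k ≥ F^k(Re κ - 1) + 1` by induction. Given it at step `k`, the bound on `Im z_{k+1}`
leaves `|Re z_{k+1}| > exp(x_k - 1) + 1 + |κ|`. If `Re z_{k+1} ≥ 0` this propagates the bound.
If `Re z_{k+1} < 0`, then `|z_{k+2}| = exp x_{k+1}` is tiny, while the `x_j` (`j ≤ k`) at least
double at each step, so `∑_{j ≤ k+1} (x_j + 1) ≤ -1`. Since
`|E_κ w - E_κ z| ≤ e |E_κ z| |w - z|` for `|w - z| ≤ 1`, the orbit of any `w` with
`|w| ≤ 2|z_{k+2}|` then shadows that of `0` with error factor `exp ∑ (x_j + 1) ≤ 1/2`, so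
`E_κ^{k+2}` maps that disc into itself and the singular orbit cannot escape.
-/

open Real Finset Function Metric

lemma monotone_F : Monotone F := fun _ _ h => by unfold F; gcongr

lemma le_F (t : ℝ) : t ≤ F t := by
  unfold F; linarith [add_one_le_exp t]

lemma le_F_iterate (t : ℝ) (k : ℕ) : t ≤ F^[k] t :=
  id_le_iterate_of_id_le le_F k t

lemma F_iterate_succ_add_one (t : ℝ) (k : ℕ) : F^[k + 1] t + 1 = exp (F^[k] t) := by
  rw [iterate_succ_apply', F]; ring

lemma add_one_le_F {t : ℝ} (ht : 2 ≤ t) : t + 1 ≤ F t := by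
  unfold F; nlinarith [quadratic_le_exp_of_nonneg (show 0 ≤ t by linarith)]

lemma add_le_F_iterate {t : ℝ} (ht : 2 ≤ t) (k : ℕ) : t + k ≤ F^[k] t := by
  induction k with
  | zero => simp
  | succ k ih =>
    rw [iterate_succ_apply']
    have := add_one_le_F (show 2 ≤ F^[k] t by linarith [k.cast_nonneg (α := ℝ)])
    push_cast
    linarith

lemma sub_le_F_sub_F {s u : ℝ} (hs : 0 ≤ s) (hsu : s ≤ u) : u - s ≤ F u - F s := by
  have hexp : exp u = exp s * exp (u - s) := by rw [← exp_add]; ring_nf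
  have := add_one_le_exp (u - s)
  have := one_le_exp hs
  unfold F
  nlinarith

lemma F_iterate_add_le {s d : ℝ} (hs : 0 ≤ s) (hd : 0 ≤ d) (k : ℕ) :
    F^[k] s + d ≤ F^[k] (s + d) := by
  induction k with
  | zero => simp
  | succ k ih =>
    rw [iterate_succ_apply', iterate_succ_apply']
    have := sub_le_F_sub_F (hs.trans (le_F_iterate s k))
      (show F^[k] s ≤ F^[k] s + d by linarith)
    linarith [monotone_F ih]

lemma three_mul_le_exp_sub_one {x : ℝ} (hx : 4 ≤ x) : 3 * x ≤ exp (x - 1) := by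
  have he : exp 3 = exp 1 ^ 3 := by rw [← exp_nat_mul]; norm_num
  have hsplit : exp (x - 1) = exp 3 * exp (x - 4) := by rw [← exp_add]; ring_nf
  have he3 : 12 ≤ exp 3 := by
    have := pow_le_pow_left₀ (by norm_num) exp_one_gt_d9.le 3
    rw [he]; norm_num at this; linarith
  have := mul_le_mul he3 (add_one_le_exp (x - 4)) (by linarith) (exp_pos 3).le
  linarith

lemma exp_sub_one_add_exp_sub_two_le (x : ℝ) : exp (x - 1) + exp (x - 2) ≤ exp x := by
  have h1 : exp (x - 1) = exp x * exp (-1) := by rw [← exp_add]; ring_nf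
  have h2 : exp (x - 2) = exp x * exp (-1) ^ 2 := by rw [← exp_nat_mul, ← exp_add]; ring_nf
  have hsmall : exp (-1) + exp (-1) ^ 2 ≤ 1 := by nlinarith [exp_neg_one_lt_half, exp_pos (-1)]
  rw [h1, h2]
  nlinarith [mul_le_mul_of_nonneg_left hsmall (exp_pos x).le]

lemma sum_range_succ_le_two_mul {a : ℕ → ℝ} {n : ℕ} (h0 : 0 ≤ a 0)
    (h : ∀ i < n, 2 * a i ≤ a (i + 1)) : ∑ i ∈ range (n + 1), a i ≤ 2 * a n := by
  induction n with
  | zero => simp; linarith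
  | succ n ih =>
    rw [sum_range_succ]
    linarith [ih fun i hi => h i (by omega), h n n.lt_succ_self]

lemma norm_iterate_sub_iterate_le {E : Type*} [SeminormedAddCommGroup E] {f : E → E}
    {g : E → ℝ} (hf : ∀ w z, ‖w - z‖ ≤ 1 → ‖f w - f z‖ ≤ exp (g z) * ‖w - z‖) {w z : E}
    {n : ℕ} (hsmall : ∀ j < n, exp (∑ i ∈ range j, g (f^[i] z)) * ‖w - z‖ ≤ 1) :
    ‖f^[n] w - f^[n] z‖ ≤ exp (∑ i ∈ range n, g (f^[i] z)) * ‖w - z‖ := by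
  induction n with
  | zero => simp
  | succ n ih =>
    have hn := ih fun j hj => hsmall j (by omega)
    rw [iterate_succ_apply', iterate_succ_apply', sum_range_succ, exp_add]
    calc ‖f (f^[n] w) - f (f^[n] z)‖ ≤ exp (g (f^[n] z)) * ‖f^[n] w - f^[n] z‖ :=
          hf _ _ (hn.trans (hsmall n n.lt_succ_self))
      _ ≤ exp (g (f^[n] z)) * (exp (∑ i ∈ range n, g (f^[i] z)) * ‖w - z‖) := by gcongr
      _ = _ := by ring

lemma not_tendsto_norm_iterate_of_mapsTo {E : Type*} [SeminormedAddCommGroup E] {f : E → E}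
    {p : ℕ} (hp : 0 < p) {s : Set E} (hs : Bornology.IsBounded s) (hf : MapsTo f^[p] s s)
    {x : E} (hx : x ∈ s) : ¬ Tendsto (fun n => ‖f^[n] x‖) atTop atTop := by
  intro h
  obtain ⟨R, hR⟩ := hs.exists_norm_le
  obtain ⟨N, hN⟩ := eventually_atTop.1 (h.eventually_gt_atTop R)
  have hmem : f^[p * N] x ∈ s := by
    rw [iterate_mul]; exact hf.iterate N hx
  linarith [hR _ hmem, hN (p * N) (Nat.le_mul_of_pos_left N hp)]

lemma norm_Ek (κ z : ℂ) : ‖Ek κ z‖ = exp (z.re + κ.re) := by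
  rw [Ek, Complex.norm_exp, Complex.add_re]

lemma norm_Ek_sub_Ek_le {κ w z : ℂ} (h : ‖w - z‖ ≤ 1) :
    ‖Ek κ w - Ek κ z‖ ≤ exp (z.re + κ.re + 1) * ‖w - z‖ := by
  have hfactor : Ek κ w - Ek κ z = Ek κ z * (Complex.exp (w - z) - 1) := by
    rw [Ek, Ek, mul_sub, mul_one, ← Complex.exp_add]; ring_nf
  have h2 : (2 : ℝ) ≤ exp 1 := by linarith [add_one_le_exp (1 : ℝ)]
  rw [hfactor, norm_mul, norm_Ek, exp_add (z.re + κ.re) 1]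
  calc _ ≤ exp (z.re + κ.re) * (2 * ‖w - z‖) := by
        gcongr; exact Complex.norm_exp_sub_one_le h
    _ ≤ _ := by rw [mul_assoc]; gcongr

lemma exp_sub_one_add_lt_abs_re_Ek {κ z : ℂ} {b : ℝ} (hb : b + 2 ≤ z.re + κ.re)
    (him : |(Ek κ z).im| < F b - ‖κ‖) :
    exp (z.re + κ.re - 1) + 1 + ‖κ‖ < |(Ek κ z).re| := by
  have hnorm := Complex.norm_le_abs_re_add_abs_im (Ek κ z)
  rw [norm_Ek] at hnorm
  have hb' : exp b ≤ exp (z.re + κ.re - 2) := exp_le_exp.2 (by linarith)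
  have := exp_sub_one_add_exp_sub_two_le (z.re + κ.re)
  unfold F at him
  linarith

section SingularOrbit

variable {κ : ℂ}

lemma exp_sub_one_add_lt_abs_re_iterate_succ (hre : 2 ≤ κ.re) {k : ℕ}
    (hIm : |((Ek κ)^[k + 1] 0).im| < F^[k + 1] (κ.re - 2) - ‖κ‖)
    (hP : F^[k] (κ.re - 1) + 1 ≤ ((Ek κ)^[k] 0).re + κ.re) :
    exp (((Ek κ)^[k] 0).re + κ.re - 1) + 1 + ‖κ‖ < |((Ek κ)^[k + 1] 0).re| := by
  rw [iterate_succ_apply' (Ek κ), iterate_succ_apply' F] at hIm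
  rw [iterate_succ_apply' (Ek κ)]
  refine exp_sub_one_add_lt_abs_re_Ek ?_ hIm
  have := F_iterate_add_le (show 0 ≤ κ.re - 2 by linarith) zero_le_one k
  rw [show κ.re - 2 + 1 = κ.re - 1 by ring] at this
  linarith

lemma F_iterate_add_one_le_re_orbit_succ_of_re_nonneg (hre : 2 ≤ κ.re) {k : ℕ}
    (hIm : |((Ek κ)^[k + 1] 0).im| < F^[k + 1] (κ.re - 2) - ‖κ‖)
    (hP : F^[k] (κ.re - 1) + 1 ≤ ((Ek κ)^[k] 0).re + κ.re)
    (hnonneg : 0 ≤ ((Ek κ)^[k + 1] 0).re) :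
    F^[k + 1] (κ.re - 1) + 1 ≤ ((Ek κ)^[k + 1] 0).re + κ.re := by
  have h := exp_sub_one_add_lt_abs_re_iterate_succ hre hIm hP
  rw [abs_of_nonneg hnonneg] at h
  rw [F_iterate_succ_add_one]
  have : exp (F^[k] (κ.re - 1)) ≤ exp (((Ek κ)^[k] 0).re + κ.re - 1) :=
    exp_le_exp.2 (by linarith)
  linarith [norm_nonneg κ]

lemma mapsTo_closedBall_Ek_iterate {n : ℕ}
    (hpos : ∀ i < n, 0 ≤ ((Ek κ)^[i] 0).re + κ.re + 1)
    (hsum : ∑ i ∈ range (n + 1), (((Ek κ)^[i] 0).re + κ.re + 1) ≤ -1) :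
    MapsTo (Ek κ)^[n + 1] (closedBall 0 (2 * ‖(Ek κ)^[n + 1] 0‖))
      (closedBall 0 (2 * ‖(Ek κ)^[n + 1] 0‖)) := by
  intro w hw
  rw [mem_closedBall_zero_iff] at hw ⊢
  set S : ℕ → ℝ := fun j => ∑ i ∈ range j, (((Ek κ)^[i] 0).re + κ.re + 1)
  have hS_succ : S (n + 1) = S n + (((Ek κ)^[n] 0).re + κ.re + 1) := sum_range_succ _ _
  have hε : exp (S n) * ‖(Ek κ)^[n + 1] 0‖ = exp (S (n + 1) - 1) := by
    rw [iterate_succ_apply', norm_Ek, ← exp_add, hS_succ]; ring_nf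
  set ε := ‖(Ek κ)^[n + 1] 0‖
  have hmono : ∀ j ≤ n, S j ≤ S n := fun j hj =>
    sum_le_sum_of_subset_of_nonneg (range_subset_range.2 hj)
      fun i hi _ => hpos i (mem_range.1 hi)
  have hexpS : exp (S (n + 1)) ≤ 1 / 2 := (exp_le_exp.2 hsum).trans exp_neg_one_lt_half.le
  have hsmall : ∀ j < n + 1, exp (S j) * ‖w - 0‖ ≤ 1 := by
    intro j hj
    have hexp1 : exp (S (n + 1) - 1) ≤ exp (S (n + 1)) := exp_le_exp.2 (by linarith)
    calc exp (S j) * ‖w - 0‖ ≤ exp (S n) * (2 * ε) := by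
          rw [sub_zero]; gcongr; exact hmono j (by omega)
      _ ≤ 1 := by nlinarith
  have hshadow := norm_iterate_sub_iterate_le (g := fun z => z.re + κ.re + 1)
    (fun _ _ h => norm_Ek_sub_Ek_le h) hsmall
  rw [sub_zero] at hshadow
  calc ‖(Ek κ)^[n + 1] w‖ ≤ ε + ‖(Ek κ)^[n + 1] w - (Ek κ)^[n + 1] 0‖ :=
        norm_le_insert' _ _
    _ ≤ ε + 1 / 2 * (2 * ε) := by
        gcongr; exact hshadow.trans (mul_le_mul hexpS hw (norm_nonneg _) (by norm_num))
    _ = 2 * ε := by ring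

lemma sum_orbit_le_neg_one (hre : 4 ≤ κ.re)
    (hIm : ∀ k : ℕ, 1 ≤ k → |((Ek κ)^[k] 0).im| < F^[k] (κ.re - 2) - ‖κ‖) {m : ℕ}
    (hP : ∀ j ≤ m, F^[j] (κ.re - 1) + 1 ≤ ((Ek κ)^[j] 0).re + κ.re)
    (hneg : ((Ek κ)^[m + 1] 0).re < 0) :
    ∑ i ∈ range (m + 2), (((Ek κ)^[i] 0).re + κ.re + 1) ≤ -1 := by
  set x : ℕ → ℝ := fun k => ((Ek κ)^[k] 0).re + κ.re with hx
  have hκ : κ.re ≤ ‖κ‖ := Complex.re_le_norm κ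
  have hgrowth : ∀ j ≤ m, κ.re + j ≤ x j := fun j hj => by
    linarith [hP j hj, add_le_F_iterate (show 2 ≤ κ.re - 1 by linarith) j]
  have hfour : ∀ j ≤ m, 4 ≤ x j := fun j hj => by
    linarith [hgrowth j hj, j.cast_nonneg (α := ℝ)]
  have hstep : ∀ j ≤ m, exp (x j - 1) + 1 + ‖κ‖ < |((Ek κ)^[j + 1] 0).re| := fun j hj =>
    exp_sub_one_add_lt_abs_re_iterate_succ (by linarith) (hIm _ le_add_self) (hP j hj)
  have hdouble : ∀ j < m, 2 * x j ≤ x (j + 1) := by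
    intro j hj
    have h := hstep j hj.le
    rw [abs_of_nonneg (by linarith [hgrowth (j + 1) hj])] at h
    have hx_succ : x (j + 1) = ((Ek κ)^[j + 1] 0).re + κ.re := rfl
    linarith [three_mul_le_exp_sub_one (hfour j hj.le), hfour j hj.le]
  have hlast : x (m + 1) < -exp (x m - 1) - 1 := by
    have h := hstep m le_rfl
    rw [abs_of_neg hneg] at h
    linarith
  have hgeom : ∑ i ∈ range (m + 1), x i ≤ 2 * x m :=
    sum_range_succ_le_two_mul (by simp [hx]; linarith) hdouble
  have hsplit : ∑ i ∈ range (m + 2), (x i + 1)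
      = ∑ i ∈ range (m + 1), x i + (m + 1) + x (m + 1) + 1 := by
    rw [sum_range_succ, sum_add_distrib]; simp; ring
  rw [hsplit]
  linarith [three_mul_le_exp_sub_one (hfour m le_rfl), hgrowth m le_rfl]

lemma notMem_escapingParams_of_re_neg (hre : 4 ≤ κ.re)
    (hIm : ∀ k : ℕ, 1 ≤ k → |((Ek κ)^[k] 0).im| < F^[k] (κ.re - 2) - ‖κ‖) {m : ℕ}
    (hP : ∀ j ≤ m, F^[j] (κ.re - 1) + 1 ≤ ((Ek κ)^[j] 0).re + κ.re)
    (hneg : ((Ek κ)^[m + 1] 0).re < 0) :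
    κ ∉ escapingParams := by
  have hpos : ∀ i < m + 1, 0 ≤ ((Ek κ)^[i] 0).re + κ.re + 1 := fun i hi => by
    linarith [hP i (by omega), le_F_iterate (κ.re - 1) i]
  exact not_tendsto_norm_iterate_of_mapsTo (m + 1).succ_pos isBounded_closedBall
    (mapsTo_closedBall_Ek_iterate hpos (sum_orbit_le_neg_one hre hIm hP hneg))
    (mem_closedBall_self (by positivity))

lemma F_iterate_add_one_le_re_orbit (hκ : κ ∈ escapingParams) (hre : 4 ≤ κ.re)
    (hIm : ∀ k : ℕ, 1 ≤ k → |((Ek κ)^[k] 0).im| < F^[k] (κ.re - 2) - ‖κ‖) (k : ℕ) :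
    F^[k] (κ.re - 1) + 1 ≤ ((Ek κ)^[k] 0).re + κ.re := by
  induction k using Nat.strong_induction_on with
  | _ k ih =>
  cases k with
  | zero => simp
  | succ m =>
    have hP : ∀ j ≤ m, F^[j] (κ.re - 1) + 1 ≤ ((Ek κ)^[j] 0).re + κ.re :=
      fun j hj => ih j (by omega)
    rcases le_or_gt 0 ((Ek κ)^[m + 1] 0).re with hnonneg | hneg
    · exact F_iterate_add_one_le_re_orbit_succ_of_re_nonneg (by linarith) (hIm _ le_add_self)
        (hP m le_rfl) hnonneg
    · exact absurd hκ (notMem_escapingParams_of_re_neg hre hIm hP hneg)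

end SingularOrbit

theorem behavior_singular_orbit_general (κ : ℂ) (hκ : κ ∈ escapingParams)
    (hre : 4 ≤ κ.re)
    (hIm : ∀ k : ℕ, 1 ≤ k →
      |((Ek κ)^[k] 0).im| < F^[k] (κ.re - 2) - ‖κ‖) :
    ∀ k : ℕ, F^[k] (κ.re - 1) - ‖κ‖ ≤ |((Ek κ)^[k] 0).re| := fun k => by
  linarith [F_iterate_add_one_le_re_orbit hκ hre hIm k, Complex.re_le_norm κ,
    le_abs_self ((Ek κ)^[k] 0).re]

/-- **The Behavior of the Singular Orbit.**
Let `κ ∈ I` with `Re κ ≥ 4` and `|Im κ| ≤ Re κ - 2`, let `K = |κ|` and let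
`z_k = E_κ^{∘(k-1)}(0)` be the singular orbit. If `|Im z_k| < F^{∘(k-1)}(Re κ - 2) - K`
for all `k ≥ 2`, then `|Re z_k| ≥ F^{∘(k-1)}(Re κ - 1) - K` for all `k ≥ 1`.
(Here the index `k ≥ 1` of the paper corresponds to the iterate count `k - 1 ≥ 0`.) -/
theorem behavior_singular_orbit (κ : ℂ) (hκ : κ ∈ escapingParams)
    (hre : 4 ≤ κ.re) (him : |κ.im| ≤ κ.re - 2)
    (hIm : ∀ k : ℕ, 1 ≤ k →
      |((Ek κ)^[k] 0).im| < F^[k] (κ.re - 2) - ‖κ‖) :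
    ∀ k : ℕ, F^[k] (κ.re - 1) - ‖κ‖ ≤ |((Ek κ)^[k] 0).re| :=
  behavior_singular_orbit_general κ hκ hre hIm
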